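/- Let G be a finite group and let A, B, C be finite abelian groups equipped with G-actions (G-modules), such that G acts trivially on A and on C and acts faithfully on B. Suppose there is a short exact sequence of G-modules 0 → A → B → C → 0, i.e., an injective G-equivariant homomorphism f : A → B and a surjective G-equivariant homomorphism g : B → C with the image of f equal to the kernel of g. If C can be generated by k elements, then the order of G divides (#A)^k. -/
import Mathlib


/-- Let `G` be a finite group and `A, B, C` finite abelian groups with `G`-actions
(by additive group automorphisms), trivial on `A` and `C` and faithful on `B`.
Given a short exact sequence `0 → A → B → C → 0` of `G`-modules, if `C` can be
generated by `k` elements, then `#G` divides `(#A)^k`. -/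
theorem card_dvd_pow_of_exact_sequence
    (G : Type*) [Group G] [Finite G]
    (A B C : Type*) [AddCommGroup A] [AddCommGroup B] [AddCommGroup C]
    [Finite A] [Finite B] [Finite C]
    [DistribMulAction G A] [DistribMulAction G B] [DistribMulAction G C]
    (hA : ∀ (σ : G) (a : A), σ • a = a)
    (hC : ∀ (σ : G) (c : C), σ • c = c)
    (hB : ∀ σ : G, (∀ b : B, σ • b = b) → σ = 1)
    (f : A →+ B) (g : B →+ C)
    (hf : Function.Injective f) (hg : Function.Surjective g)
    (hfG : ∀ (σ : G) (a : A), f (σ • a) = σ • f a)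
    (hgG : ∀ (σ : G) (b : B), g (σ • b) = σ • g b)
    (hex : f.range = g.ker)
    (k : ℕ)
    (hgen : ∃ S : Finset C, S.card ≤ k ∧ AddSubgroup.closure (S : Set C) = ⊤) :
    Nat.card G ∣ (Nat.card A) ^ k := by
  classical
  obtain ⟨S, hSk, hScl⟩ := hgen
  -- generators indexed by Fin k
  set c : Fin k → C := fun i =>
    if h : (i : ℕ) < S.card then (S.equivFin.symm ⟨i, h⟩ : C) else 0 with hc
  have hcgen : AddSubgroup.closure (Set.range c) = ⊤ := by
    rw [eq_top_iff, ← hScl]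
    refine AddSubgroup.closure_le _ |>.2 ?_
    intro x hx
    have : ∃ i : Fin k, c i = x := by
      obtain ⟨j, hj⟩ := S.equivFin.symm.surjective ⟨x, hx⟩
      refine ⟨⟨(j : ℕ), lt_of_lt_of_le j.2 hSk⟩, ?_⟩
      simp only [hc]
      rw [dif_pos j.2]
      simp [Fin.eta, hj]
    obtain ⟨i, hi⟩ := this
    exact hi ▸ AddSubgroup.subset_closure ⟨i, rfl⟩
  -- lift generators
  choose b hb using fun i => hg (c i)
  -- for each σ, i : σ • b i - b i ∈ range f
  have hker : ∀ (σ : G) (i : Fin k), σ • b i - b i ∈ f.range := by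
    intro σ i
    rw [hex, AddMonoidHom.mem_ker, map_sub, hgG, hC, sub_self]
  choose a ha using fun σ i => hker σ i
  -- φ is a homomorphism
  have key : ∀ σ τ i, a (σ * τ) i = a σ i + a τ i := by
    intro σ τ i
    apply hf
    have h2 : f (a τ i) = σ • (τ • b i) - σ • b i := by
      rw [← hA σ (a τ i), hfG, ha, smul_sub]
    rw [map_add, ha, ha, h2, mul_smul]
    abel
  let φ : G →* Multiplicative (Fin k → A) :=
    { toFun := fun σ => Multiplicative.ofAdd (fun i => a σ i)
      map_one' := by
        have h0 : (fun i => a 1 i) = (0 : Fin k → A) := by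
          funext i
          show a 1 i = 0
          exact hf (by rw [ha, one_smul, sub_self, map_zero])
        simp only [h0]
        rfl
      map_mul' := by
        intro σ τ
        have h0 : (fun i => a (σ * τ) i) =
            (fun i => a σ i) + (fun i => a τ i) := funext (key σ τ)
        simp only [h0]
        rfl }
  have hinj : Function.Injective φ := by
    intro σ τ h
    suffices h1 : ∀ σ : G, (∀ i, a σ i = 0) → σ = 1 by
      have hz : ∀ i, a (σ * τ⁻¹) i = 0 := by
        intro i
        have := key σ τ⁻¹ i
        have hτ : a τ⁻¹ i = - a τ i := by
          have h1i : a 1 i = 0 := hf (by rw [ha, one_smul, sub_self, map_zero])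
          have h2 := key τ τ⁻¹ i
          rw [mul_inv_cancel, h1i] at h2
          exact eq_neg_of_add_eq_zero_right h2.symm
        have hστ : a σ i = a τ i := congrFun (congrArg Multiplicative.toAdd h) i
        rw [this, hτ, hστ, add_neg_cancel]
      have := h1 _ hz
      exact mul_inv_eq_one.mp this
    intro σ hz
    apply hB
    -- fixed points of σ form a subgroup
    set F : AddSubgroup B :=
      { carrier := {x | σ • x = x}
        add_mem' := by intro x y hx hy; simp only [Set.mem_setOf_eq, smul_add] at *
                       rw [hx, hy]
        zero_mem' := by simp
        neg_mem' := by intro x hx; simp only [Set.mem_setOf_eq, smul_neg] at *; rw [hx] }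
    have hbF : ∀ i, b i ∈ F := by
      intro i
      have h2 := ha σ i
      rw [hz, map_zero] at h2
      exact sub_eq_zero.mp h2.symm
    have hfF : ∀ x ∈ f.range, x ∈ F := by
      rintro _ ⟨y, rfl⟩
      show σ • f y = f y
      rw [← hfG, hA]
    -- B is generated by range b and f.range
    have hBgen : AddSubgroup.closure (Set.range b) ⊔ f.range = ⊤ := by
      set H := AddSubgroup.closure (Set.range b) ⊔ f.range
      rw [eq_top_iff]
      intro x _
      have hgx : g x ∈ AddSubgroup.map g (AddSubgroup.closure (Set.range b)) := by
        have : AddSubgroup.map g (AddSubgroup.closure (Set.range b)) = ⊤ := by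
          rw [eq_top_iff, ← hcgen]
          refine AddSubgroup.closure_le _ |>.2 ?_
          rintro _ ⟨i, rfl⟩
          exact ⟨b i, AddSubgroup.subset_closure ⟨i, rfl⟩, hb i⟩
        rw [this]; trivial
      obtain ⟨y, hy, hyx⟩ := hgx
      have hxy : x - y ∈ f.range := by
        rw [hex, AddMonoidHom.mem_ker, map_sub, hyx, sub_self]
      have : x = y + (x - y) := by abel
      rw [this]
      exact add_mem (le_sup_left (α := AddSubgroup B) hy)
        (le_sup_right (α := AddSubgroup B) hxy)
    intro x
    have hx : x ∈ AddSubgroup.closure (Set.range b) ⊔ f.range := hBgen ▸ trivial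
    have hFle : AddSubgroup.closure (Set.range b) ⊔ f.range ≤ F := by
      refine sup_le ?_ ?_
      · exact AddSubgroup.closure_le _ |>.2 (by rintro _ ⟨i, rfl⟩; exact hbF i)
      · intro y hy; exact hfF y hy
    exact hFle hx
  -- conclude
  have h1 : Nat.card G = Nat.card φ.range := (Nat.card_range_of_injective hinj).symm
  rw [h1]
  have h2 : Nat.card φ.range ∣ Nat.card (Multiplicative (Fin k → A)) :=
    Subgroup.card_subgroup_dvd_card φ.range
  have h3 : Nat.card (Multiplicative (Fin k → A)) = (Nat.card A) ^ k := by
    rw [Nat.card_congr (Multiplicative.toAdd (α := Fin k → A)), Nat.card_fun,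
      Nat.card_eq_fintype_card (α := Fin k), Fintype.card_fin]
  rw [← h3]
  exact h2
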